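/- arXiv:2401.15423 — 2 statements merged into one kernel-verified Lean document; each statement's English description precedes it below -/
import Mathlib

section
/- Consistency of the Young integral with densities (Theorem 4.2(A)). Let d ≥ 1 and β, γ ∈ (0,1) with γ > (d−1)/d and β + dγ > d. Let g ∈ L^{1/(1−γ)}([0,1]^d) and define ω on the dyadic cubes of [0,1]^d by ω(K) = ∫_K g. Then ω is additive, ‖ω‖_γ ≤ ‖g‖_{L^{1/(1−γ)}}, and for every β-Hölder continuous f : [0,1]^d → ℝ, the absolutely convergent series ω([0,1]^d) ∫_{[0,1]^d} f + Σ_{n=0}^∞ Σ_{k ∈ {0,…,2^n−1}^d} Σ_{ε ∈ {0,1}^d \ {0}} a_{n,k,ε}(ω) ∫_{[0,1]^d} f g_{n,k,ε} is equal to ∫_{[0,1]^d} f g. -/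
open MeasureTheory Filter
open scoped BigOperators ENNReal Classical

noncomputable section

/-- Points of `ℝ^d` with the Euclidean norm. -/
abbrev Euc (d : ℕ) := EuclideanSpace ℝ (Fin d)

/-- The closed dyadic cube of generation `n` with lower corner `2^{-n} k` inside `[0,1]^d`. -/
def dyCube (d n : ℕ) (k : Fin d → ℕ) : Set (Euc d) :=
  {x | ∀ i, (k i : ℝ) / 2 ^ n ≤ x i ∧ x i ≤ ((k i : ℝ) + 1) / 2 ^ n}

/-- The unit cube `[0,1]^d`. -/
def uCube (d : ℕ) : Set (Euc d) := dyCube d 0 (fun _ => 0)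

/-- Volume `2^{-nd}` of a dyadic cube of generation `n`. -/
def dyVol (d n : ℕ) : ℝ := ((2 : ℝ) ^ (n * d))⁻¹

/-- A real valued function on the dyadic cubes of `[0,1]^d` (encoded by generation and
lower-corner index) is additive if its value on each cube is the sum of its values
on the `2^d` children. -/
def IsAdditiveDy (d : ℕ) (ω : ∀ _ : ℕ, (Fin d → ℕ) → ℝ) : Prop :=
  ∀ n (k : Fin d → ℕ), (∀ i, k i < 2 ^ n) →
    ω n k = ∑ j : Fin d → Fin 2, ω (n + 1) (fun i => 2 * k i + (j i : ℕ))

/-- The Haar function `g_{n,k,ε}` on `[0,1]^d`. -/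
def haarF (d n : ℕ) (k : Fin d → ℕ) (ε : Fin d → Bool) (x : Euc d) : ℝ :=
  if ∀ i, (k i : ℝ) / 2 ^ n ≤ x i ∧ x i < ((k i : ℝ) + 1) / 2 ^ n then
    (2 : ℝ) ^ (((n * d : ℕ) : ℝ) / 2) *
      ∏ i, (if ε i then (if (2 : ℝ) ^ n * x i - (k i : ℝ) < 1 / 2 then (1 : ℝ) else -1) else 1)
  else 0

/-- The Faber–Schauder coefficient `a_{n,k,ε}(ω)` of an additive function on dyadic cubes. -/
def fsCoeff (d : ℕ) (ω : ∀ _ : ℕ, (Fin d → ℕ) → ℝ) (n : ℕ) (k : Fin d → ℕ)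
    (ε : Fin d → Bool) : ℝ :=
  (2 : ℝ) ^ (((n * d : ℕ) : ℝ) / 2) *
    ∑ j : Fin d → Fin 2,
      (∏ i, (if ε i then (if j i = 0 then (1 : ℝ) else -1) else 1)) *
        ω (n + 1) (fun i => 2 * k i + (j i : ℕ))


/-- The `n`-th level of the Young integral series:
`Σ_{k} Σ_{ε ≠ 0} a_{n,k,ε}(ω) ∫_{[0,1]^d} f g_{n,k,ε}`. -/
def youngLevel (d : ℕ) (ω : ∀ _ : ℕ, (Fin d → ℕ) → ℝ) (f : Euc d → ℝ) (n : ℕ) : ℝ :=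
  ∑ k : Fin d → Fin (2 ^ n), ∑ ε ∈ Finset.univ.erase (fun _ : Fin d => false),
    fsCoeff d ω n (fun i => (k i : ℕ)) ε *
      ∫ x in uCube d, f x * haarF d n (fun i => (k i : ℕ)) ε x

section YoungAux
variable {d : ℕ}

def hCube (d n : ℕ) (k : Fin d → ℕ) : Set (Euc d) :=
  {x | ∀ i, (k i : ℝ) / 2 ^ n ≤ x i ∧ x i < ((k i : ℝ) + 1) / 2 ^ n}

lemma measurableSet_dyCube (n : ℕ) (k : Fin d → ℕ) : MeasurableSet (dyCube d n k) := by
  have : dyCube d n k = ⋂ i, (fun x : Euc d => x i) ⁻¹'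
      (Set.Icc ((k i : ℝ) / 2 ^ n) (((k i : ℝ) + 1) / 2 ^ n)) := by
    ext x; simp [dyCube, Set.mem_iInter]
  rw [this]
  exact MeasurableSet.iInter fun i => (by fun_prop : Measurable fun x : Euc d => x i) measurableSet_Icc

lemma measurableSet_hCube (n : ℕ) (k : Fin d → ℕ) : MeasurableSet (hCube d n k) := by
  have : hCube d n k = ⋂ i, (fun x : Euc d => x i) ⁻¹'
      (Set.Ico ((k i : ℝ) / 2 ^ n) (((k i : ℝ) + 1) / 2 ^ n)) := by
    ext x; simp [hCube, Set.mem_iInter]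
  rw [this]
  exact MeasurableSet.iInter fun i => (by fun_prop : Measurable fun x : Euc d => x i) measurableSet_Ico

lemma volume_hyperplane (i : Fin d) (c : ℝ) : volume {x : Euc d | x i = c} = 0 := by
  have e := EuclideanSpace.volume_preserving_symm_measurableEquiv_toLp (Fin d)
  have hs : {x : Euc d | x i = c} =
      (MeasurableEquiv.toLp 2 (Fin d → ℝ)).symm ⁻¹' {f : Fin d → ℝ | f i = c} := rfl
  have hm : MeasurableSet {f : Fin d → ℝ | f i = c} := by
    have : {f : Fin d → ℝ | f i = c} = (fun f : Fin d → ℝ => f i) ⁻¹' {c} := rfl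
    rw [this]; exact (measurable_pi_apply i) (measurableSet_singleton c)
  rw [hs, e.measure_preimage hm.nullMeasurableSet]
  have : (volume : Measure (Fin d → ℝ)) = Measure.pi fun _ => volume := rfl
  rw [this]
  exact Measure.pi_hyperplane (fun _ : Fin d => (volume : Measure ℝ)) i c

lemma hCube_subset_dyCube (n : ℕ) (k : Fin d → ℕ) : hCube d n k ⊆ dyCube d n k :=
  fun x hx i => ⟨(hx i).1, (hx i).2.le⟩

lemma dyCube_ae_hCube (n : ℕ) (k : Fin d → ℕ) : dyCube d n k =ᵐ[volume] hCube d n k := by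
  rw [MeasureTheory.ae_eq_set]
  constructor
  · refine measure_mono_null (fun x hx => ?_)
      (measure_iUnion_null fun i => volume_hyperplane i (((k i : ℝ) + 1) / 2 ^ n))
    obtain ⟨hx1, hx2⟩ := hx
    simp only [hCube, Set.mem_setOf_eq, not_forall] at hx2
    obtain ⟨i, hi⟩ := hx2
    refine Set.mem_iUnion.2 ⟨i, ?_⟩
    have h1 := (hx1 i).1
    have h2 := (hx1 i).2
    have : ¬ x i < ((k i : ℝ) + 1) / 2 ^ n := fun h => hi ⟨h1, h⟩
    exact le_antisymm h2 (not_lt.1 this)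
  · rw [Set.diff_eq_empty.2 (hCube_subset_dyCube n k)]; simp

lemma restrict_dyCube (n : ℕ) (k : Fin d → ℕ) :
    volume.restrict (dyCube d n k) = volume.restrict (hCube d n k) :=
  Measure.restrict_congr_set (dyCube_ae_hCube n k)

lemma integral_dyCube_hCube (n : ℕ) (k : Fin d → ℕ) (h : Euc d → ℝ) :
    ∫ x in dyCube d n k, h x = ∫ x in hCube d n k, h x := by
  rw [restrict_dyCube]

lemma volume_dyCube (n : ℕ) (k : Fin d → ℕ) :
    volume (dyCube d n k) = ENNReal.ofReal (dyVol d n) := by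
  have e := EuclideanSpace.volume_preserving_symm_measurableEquiv_toLp (Fin d)
  have hs : dyCube d n k = (MeasurableEquiv.toLp 2 (Fin d → ℝ)).symm ⁻¹'
      (Set.univ.pi fun i => Set.Icc ((k i : ℝ) / 2 ^ n) (((k i : ℝ) + 1) / 2 ^ n)) := by
    ext x
    simp only [Set.mem_preimage, Set.mem_pi, Set.mem_univ, true_implies, Set.mem_Icc,
      dyCube, Set.mem_setOf_eq]
    exact Iff.rfl
  have hm : MeasurableSet (Set.univ.pi fun i : Fin d =>
      Set.Icc ((k i : ℝ) / 2 ^ n) (((k i : ℝ) + 1) / 2 ^ n)) :=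
    MeasurableSet.univ_pi fun i => measurableSet_Icc
  rw [hs, e.measure_preimage hm.nullMeasurableSet, volume_pi_pi]
  have h1 : ∀ i : Fin d, volume (Set.Icc ((k i : ℝ) / 2 ^ n) (((k i : ℝ) + 1) / 2 ^ n))
      = ENNReal.ofReal (((2 : ℝ) ^ n)⁻¹) := by
    intro i
    rw [Real.volume_Icc]
    congr 1
    field_simp; ring
  rw [Finset.prod_congr rfl fun i _ => h1 i, Finset.prod_const, Finset.card_univ,
    Fintype.card_fin, ← ENNReal.ofReal_pow (by positivity)]
  congr 1
  show ((2:ℝ) ^ n)⁻¹ ^ d = ((2:ℝ) ^ (n * d))⁻¹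
  rw [inv_pow, ← pow_mul]

lemma volume_hCube (n : ℕ) (k : Fin d → ℕ) :
    volume (hCube d n k) = ENNReal.ofReal (dyVol d n) := by
  rw [← volume_dyCube n k]
  exact (measure_congr (dyCube_ae_hCube n k)).symm

lemma dyCube_subset_uCube (n : ℕ) (k : Fin d → ℕ) (hk : ∀ i, k i < 2 ^ n) :
    dyCube d n k ⊆ uCube d := by
  intro x hx i
  have h1 := (hx i).1
  have h2 := (hx i).2
  have hp : (0:ℝ) < 2 ^ n := by positivity
  constructor
  · have : (0:ℝ) ≤ (k i : ℝ) / 2 ^ n := by positivity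
    simpa using this.trans h1
  · have hb : ((k i : ℝ) + 1) / 2 ^ n ≤ 1 := by
      rw [div_le_one hp]
      have : (k i : ℝ) + 1 ≤ (2:ℝ) ^ n := by
        have := hk i
        push_cast
        exact_mod_cast Nat.succ_le_of_lt this
      simpa using this
    simpa using h2.trans hb
lemma coord_child_iff (n a : ℕ) (t : ℝ) :
    ((a : ℝ) / 2 ^ n ≤ t ∧ t < ((a : ℝ) + 1) / 2 ^ n) ↔
      ∃ b : Fin 2, (((2 * a + (b : ℕ) : ℕ) : ℝ) / 2 ^ (n + 1) ≤ t ∧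
        t < (((2 * a + (b : ℕ) : ℕ) : ℝ) + 1) / 2 ^ (n + 1)) := by
  have hp : (0:ℝ) < 2 ^ n := by positivity
  have hp1 : (0:ℝ) < 2 ^ (n+1) := by positivity
  have hh : ((2:ℝ)^(n+1)) = 2 * 2^n := by ring
  rw [div_le_iff₀ hp, lt_div_iff₀ hp]
  constructor
  · rintro ⟨h1, h2⟩
    by_cases hm : t * 2^(n+1) < 2*(a:ℝ) + 1
    · refine ⟨0, ?_, ?_⟩
      · rw [div_le_iff₀ hp1, hh]; push_cast [Fin.val_zero]; nlinarith
      · rw [lt_div_iff₀ hp1, hh]; push_cast [Fin.val_zero]; rw [hh] at hm; nlinarith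
    · have hm' := not_lt.1 hm
      rw [hh] at hm'
      refine ⟨1, ?_, ?_⟩
      · rw [div_le_iff₀ hp1, hh]; push_cast [Fin.val_one]; nlinarith
      · rw [lt_div_iff₀ hp1, hh]; push_cast [Fin.val_one]; nlinarith
  · rintro ⟨b, h1, h2⟩
    rw [div_le_iff₀ hp1, hh] at h1
    rw [lt_div_iff₀ hp1, hh] at h2
    have hb : ((b:ℕ):ℝ) ≤ 1 := by exact_mod_cast Nat.lt_succ_iff.1 b.isLt
    have hb0 : (0:ℝ) ≤ ((b:ℕ):ℝ) := by positivity
    push_cast at h1 h2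
    constructor <;> nlinarith

lemma hCube_eq_iUnion (n : ℕ) (k : Fin d → ℕ) :
    hCube d n k = ⋃ j : Fin d → Fin 2, hCube d (n + 1) (fun i => 2 * k i + ((j i : ℕ))) := by
  ext x
  simp only [Set.mem_iUnion]
  constructor
  · intro hx
    choose b hb using fun i => (coord_child_iff n (k i) (x i)).1 (hx i)
    exact ⟨b, fun i => hb i⟩
  · rintro ⟨j, hj⟩ i
    exact (coord_child_iff n (k i) (x i)).2 ⟨j i, hj i⟩

lemma Ico_div_disjoint {c : ℝ} (hc : 0 < c) {p q : ℕ} (h : p ≠ q) {t : ℝ}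
    (h1 : (p : ℝ) / c ≤ t) (h2 : t < ((p : ℝ) + 1) / c)
    (h3 : (q : ℝ) / c ≤ t) (h4 : t < ((q : ℝ) + 1) / c) : False := by
  rw [div_le_iff₀ hc] at h1 h3
  rw [lt_div_iff₀ hc] at h2 h4
  have hpq : (p : ℝ) < (q : ℝ) + 1 := by linarith
  have hqp : (q : ℝ) < (p : ℝ) + 1 := by linarith
  have : p = q := by
    have h5 : p < q + 1 := by exact_mod_cast hpq
    have h6 : q < p + 1 := by exact_mod_cast hqp
    omega
  exact h this

lemma children_disjoint (n : ℕ) (k : Fin d → ℕ) :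
    Pairwise (Function.onFun Disjoint fun j : Fin d → Fin 2 =>
      hCube d (n + 1) (fun i => 2 * k i + ((j i : ℕ)))) := by
  intro j j' hjj
  obtain ⟨i, hi⟩ := Function.ne_iff.1 hjj
  refine Set.disjoint_left.2 fun x hx hx' => ?_
  have d1 := hx i
  have d2 := hx' i
  refine Ico_div_disjoint (by positivity : (0:ℝ) < 2 ^ (n+1)) ?_ d1.1 d1.2 d2.1 d2.2
  intro hEq
  apply hi
  have hEq' : 2 * k i + (j i : ℕ) = 2 * k i + (j' i : ℕ) := hEq
  have : (j i : ℕ) = (j' i : ℕ) := by omega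
  exact Fin.ext this

lemma integrableOn_congr_cube (n : ℕ) (k : Fin d → ℕ) {h : Euc d → ℝ} :
    IntegrableOn h (dyCube d n k) ↔ IntegrableOn h (hCube d n k) := by
  unfold IntegrableOn
  rw [restrict_dyCube]

lemma integral_split (n : ℕ) (k : Fin d → ℕ) {h : Euc d → ℝ}
    (hint : IntegrableOn h (dyCube d n k)) :
    ∫ x in dyCube d n k, h x =
      ∑ j : Fin d → Fin 2, ∫ x in dyCube d (n + 1) (fun i => 2 * k i + ((j i : ℕ))), h x := by
  have hsub : ∀ j : Fin d → Fin 2,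
      hCube d (n + 1) (fun i => 2 * k i + ((j i : ℕ))) ⊆ hCube d n k := by
    intro j
    rw [hCube_eq_iUnion n k]
    exact Set.subset_iUnion (fun j : Fin d → Fin 2 => hCube d (n + 1) (fun i => 2 * k i + ((j i : ℕ)))) j
  have hint' : IntegrableOn h (hCube d n k) := (integrableOn_congr_cube n k).1 hint
  rw [integral_dyCube_hCube, hCube_eq_iUnion n k]
  rw [integral_iUnion_fintype (fun j => measurableSet_hCube _ _) (children_disjoint n k)
    (fun j => hint'.mono_set (hsub j))]
  exact Finset.sum_congr rfl fun j _ => (integral_dyCube_hCube _ _ h).symm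
def childEquiv (d n : ℕ) : (Fin d → Fin (2 ^ n)) × (Fin d → Fin 2) ≃ (Fin d → Fin (2 ^ (n + 1))) where
  toFun p i := ⟨2 * (p.1 i : ℕ) + (p.2 i : ℕ), by
    have h1 := (p.1 i).isLt
    have h2 := (p.2 i).isLt
    have h3 : 2 ^ (n + 1) = 2 ^ n * 2 := pow_succ 2 n
    omega⟩
  invFun m := (fun i => ⟨(m i : ℕ) / 2, by
      have h1 := (m i).isLt
      have h3 : 2 ^ (n + 1) = 2 ^ n * 2 := pow_succ 2 n
      omega⟩,
    fun i => ⟨(m i : ℕ) % 2, Nat.mod_lt _ two_pos⟩)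
  left_inv p := by
    ext i <;> simp <;> omega
  right_inv m := by
    funext i
    apply Fin.ext
    simp
    omega

lemma sum_gen_succ {α : Type*} [AddCommMonoid α] (n : ℕ) (φ : (Fin d → ℕ) → α) :
    ∑ m : Fin d → Fin (2 ^ (n + 1)), φ (fun i => (m i : ℕ)) =
      ∑ k : Fin d → Fin (2 ^ n), ∑ j : Fin d → Fin 2,
        φ (fun i => 2 * (k i : ℕ) + ((j i : ℕ))) := by
  rw [← Equiv.sum_comp (childEquiv d n) (fun m => φ (fun i => (m i : ℕ))), Fintype.sum_prod_type]
  rfl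

lemma integral_partition (N : ℕ) {h : Euc d → ℝ} (hint : IntegrableOn h (uCube d) volume) :
    ∫ x in uCube d, h x = ∑ m : Fin d → Fin (2 ^ N), ∫ x in dyCube d N (fun i => (m i : ℕ)), h x := by
  induction N with
  | zero =>
    have hcard : ∀ m : Fin d → Fin (2 ^ 0), (fun i => ((m i : ℕ))) = fun _ => (0 : ℕ) := by
      intro m; funext i; have := (m i).isLt; omega
    rw [Finset.sum_congr rfl (fun m _ => by rw [hcard m]), Finset.sum_const, Finset.card_univ]
    have hc : Fintype.card (Fin d → Fin (2 ^ 0)) = 1 := by simp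
    rw [hc, one_smul]
    rfl
  | succ N ih =>
    rw [ih, sum_gen_succ N (fun k => ∫ x in dyCube d (N + 1) k, h x)]
    refine Finset.sum_congr rfl fun m _ => ?_
    exact integral_split N (fun i => (m i : ℕ))
      (hint.mono_set (dyCube_subset_uCube N _ fun i => (m i).isLt))

lemma isCompact_uCube : IsCompact (uCube d) := by
  refine Metric.isCompact_of_isClosed_isBounded ?_ ?_
  · have : uCube d = ⋂ i, (fun x : Euc d => x i) ⁻¹' (Set.Icc ((0:ℝ)/2^0) (((0:ℝ)+1)/2^0)) := by
      ext x; simp [uCube, dyCube, Set.mem_iInter]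
    rw [this]
    exact isClosed_iInter fun i => IsClosed.preimage (by fun_prop : Continuous fun x : Euc d => x i) isClosed_Icc
  · refine Metric.isBounded_iff_subset_closedBall 0 |>.2 ⟨Real.sqrt d, fun x hx => ?_⟩
    rw [Metric.mem_closedBall, dist_zero_right, EuclideanSpace.norm_eq]
    have hb : ∀ i, ‖x i‖ ^ 2 ≤ 1 := by
      intro i
      have h1 := (hx i).1
      have h2 := (hx i).2
      norm_num at h1 h2
      rw [Real.norm_eq_abs, abs_of_nonneg h1]
      nlinarith
    have hsum : ∑ i, ‖x i‖ ^ 2 ≤ (d : ℝ) := by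
      calc ∑ i, ‖x i‖ ^ 2 ≤ ∑ _i : Fin d, (1:ℝ) := Finset.sum_le_sum fun i _ => hb i
      _ = d := by simp
    calc Real.sqrt (∑ i, ‖x i‖ ^ 2) ≤ Real.sqrt d := Real.sqrt_le_sqrt hsum
    _ ≤ Real.sqrt d := le_refl _

lemma volume_uCube : volume (uCube d) = 1 := by
  rw [uCube, volume_dyCube]
  simp [dyVol]

instance : IsFiniteMeasure (volume.restrict (uCube d)) :=
  ⟨by rw [Measure.restrict_apply_univ, volume_uCube]; exact ENNReal.one_lt_top⟩
lemma holder_continuousOn {f : Euc d → ℝ} {L β : ℝ} (hβ0 : 0 < β)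
    (hf : ∀ x ∈ uCube d, ∀ y ∈ uCube d, |f x - f y| ≤ L * ‖x - y‖ ^ β) :
    ContinuousOn f (uCube d) := by
  intro x hx
  rw [Metric.continuousWithinAt_iff]
  intro ε hε
  refine ⟨(ε / (|L| + 1)) ^ β⁻¹, by positivity, fun y hy hdist => ?_⟩
  have hL1 : (0:ℝ) < |L| + 1 := by positivity
  have hed : (0:ℝ) < ε / (|L| + 1) := by positivity
  have h1 : |f y - f x| ≤ L * ‖y - x‖ ^ β := hf y hy x hx
  have h2 : L * ‖y - x‖ ^ β ≤ |L| * ‖y - x‖ ^ β := by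
    have : (0:ℝ) ≤ ‖y - x‖ ^ β := by positivity
    nlinarith [le_abs_self L]
  have h3 : ‖y - x‖ ^ β < ((ε / (|L| + 1)) ^ β⁻¹) ^ β := by
    rcases eq_or_lt_of_le (norm_nonneg (y - x)) with h | h
    · rw [← h, Real.zero_rpow hβ0.ne']
      positivity
    · exact Real.rpow_lt_rpow (norm_nonneg _) (by rw [← dist_eq_norm]; exact hdist) hβ0
  rw [Real.rpow_inv_rpow hed.le hβ0.ne'] at h3
  rw [Real.dist_eq]
  have h4 : |L| * ‖y - x‖ ^ β ≤ |L| * (ε / (|L| + 1)) := by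
    apply mul_le_mul_of_nonneg_left h3.le (abs_nonneg L)
  have h5 : |L| * (ε / (|L| + 1)) < ε := by
    have hq : |L| / (|L| + 1) < 1 := (div_lt_one hL1).2 (lt_add_one _)
    calc |L| * (ε / (|L| + 1)) = |L| / (|L| + 1) * ε := by ring
    _ < 1 * ε := mul_lt_mul_of_pos_right hq hε
    _ = ε := one_mul ε
  linarith

lemma integrableOn_f {f : Euc d → ℝ} {L β : ℝ} (hβ0 : 0 < β)
    (hf : ∀ x ∈ uCube d, ∀ y ∈ uCube d, |f x - f y| ≤ L * ‖x - y‖ ^ β) :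
    IntegrableOn f (uCube d) volume :=
  (holder_continuousOn hβ0 hf).integrableOn_compact isCompact_uCube
lemma holder_bound {γ : ℝ} (hγ0 : 0 < γ) (hγ1 : γ < 1) {g : Euc d → ℝ}
    (hg : MemLp g (ENNReal.ofReal (1 / (1 - γ))) (volume.restrict (uCube d)))
    (n : ℕ) (k : Fin d → ℕ) (hk : ∀ i, k i < 2 ^ n) :
    ENNReal.ofReal |∫ x in dyCube d n k, g x| ≤
      eLpNorm g (ENNReal.ofReal (1 / (1 - γ))) (volume.restrict (uCube d)) *
        ENNReal.ofReal (dyVol d n ^ γ) := by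
  set μ' := volume.restrict (uCube d) with hμ'
  have h1γ : (0:ℝ) < 1 - γ := by linarith
  have hpr : (1:ℝ) < 1 / (1 - γ) := by
    rw [lt_div_iff₀ h1γ]; linarith
  have hsub : dyCube d n k ⊆ uCube d := dyCube_subset_uCube n k hk
  have hmeas := measurableSet_dyCube (d := d) n k
  -- step 1: reduce to a lintegral over the cube w.r.t. μ'
  have step1 : ENNReal.ofReal |∫ x in dyCube d n k, g x| ≤
      ∫⁻ x in dyCube d n k, (‖g x‖₊ : ℝ≥0∞) ∂μ' := by
    rw [← Real.enorm_eq_ofReal_abs]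
    have : μ'.restrict (dyCube d n k) = volume.restrict (dyCube d n k) := by
      rw [hμ', Measure.restrict_restrict hmeas, Set.inter_eq_self_of_subset_left hsub]
    rw [show (∫⁻ x in dyCube d n k, (‖g x‖₊ : ℝ≥0∞) ∂μ') =
        ∫⁻ x in dyCube d n k, (‖g x‖₊ : ℝ≥0∞) ∂volume from by rw [Measure.restrict_restrict hmeas, Set.inter_eq_self_of_subset_left hsub]]
    exact enorm_integral_le_lintegral_enorm _
  -- step 2: Hölder
  set ι : Euc d → ℝ≥0∞ := (dyCube d n k).indicator (fun _ => 1) with hι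
  have hpq : Real.HolderConjugate (1 / (1 - γ)) (1 / γ) := by
    rw [Real.holderConjugate_iff]
    constructor
    · exact hpr
    · simp only [one_div, inv_inv]; ring
  have hind : ∫⁻ x in dyCube d n k, (‖g x‖₊ : ℝ≥0∞) ∂μ' =
      ∫⁻ x, (‖g x‖₊ : ℝ≥0∞) * ι x ∂μ' := by
    rw [← lintegral_indicator hmeas]
    congr 1
    funext x
    by_cases hx : x ∈ dyCube d n k <;>
      simp [hι, Set.indicator_apply, hx]
  have hιmeas : AEMeasurable ι μ' := by
    rw [hι]
    exact ((measurable_const (a := (1:ℝ≥0∞))).indicator hmeas).aemeasurable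
  have step2 := ENNReal.lintegral_mul_le_Lp_mul_Lq μ' hpq
    (f := fun x => (‖g x‖₊ : ℝ≥0∞)) (g := ι)
    (hg.aestronglyMeasurable.enorm) hιmeas
  have hf1 : (∫⁻ x, (‖g x‖₊ : ℝ≥0∞) ^ (1 / (1 - γ)) ∂μ') ^ (1 / (1 / (1 - γ))) =
      eLpNorm g (ENNReal.ofReal (1 / (1 - γ))) μ' := by
    rw [eLpNorm_eq_lintegral_rpow_enorm_toReal (by simp [ENNReal.ofReal_eq_zero]; linarith)
      ENNReal.ofReal_ne_top, ENNReal.toReal_ofReal (by positivity)]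
    rfl
  have hιpow : ∀ x, ι x ^ (1 / γ) = ι x := by
    intro x
    by_cases hx : x ∈ dyCube d n k
    · simp [hι, Set.indicator_apply, hx]
    · simp only [hι, Set.indicator_apply, hx, if_false]
      exact ENNReal.zero_rpow_of_pos (one_div_pos.2 hγ0)
  have hf2 : (∫⁻ x, ι x ^ (1 / γ) ∂μ') ^ (1 / (1 / γ)) = ENNReal.ofReal (dyVol d n ^ γ) := by
    have : (∫⁻ x, ι x ^ (1 / γ) ∂μ') = ENNReal.ofReal (dyVol d n) := by
      rw [lintegral_congr hιpow, hι, lintegral_indicator hmeas, setLIntegral_one, hμ',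
        Measure.restrict_apply hmeas, Set.inter_eq_self_of_subset_left hsub, volume_dyCube]
    rw [this, one_div_one_div, ENNReal.ofReal_rpow_of_pos (by rw [dyVol]; positivity)]
  calc ENNReal.ofReal |∫ x in dyCube d n k, g x|
      ≤ ∫⁻ x in dyCube d n k, (‖g x‖₊ : ℝ≥0∞) ∂μ' := step1
    _ = ∫⁻ x, ((fun x => (‖g x‖₊ : ℝ≥0∞)) * ι) x ∂μ' := hind
    _ ≤ (∫⁻ x, (‖g x‖₊ : ℝ≥0∞) ^ (1 / (1 - γ)) ∂μ') ^ (1 / (1 / (1 - γ))) *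
        (∫⁻ x, ι x ^ (1 / γ) ∂μ') ^ (1 / (1 / γ)) := step2
    _ = _ := by rw [hf1, hf2]
def sg (a : Fin 2) : ℝ := if a = 0 then 1 else -1

lemma sg_mul_self (a : Fin 2) : sg a * sg a = 1 := by
  fin_cases a <;> simp [sg]

lemma sum_bool_orth (a a' : Fin 2) :
    (∑ b : Bool, if b then sg a * sg a' else 1) = if a = a' then (2:ℝ) else 0 := by
  fin_cases a <;> fin_cases a' <;> simp [sg] <;> norm_num

lemma orth (j j' : Fin d → Fin 2) :
    ∑ ε : Fin d → Bool, (∏ i, (if ε i then sg (j i) else 1)) * (∏ i, (if ε i then sg (j' i) else 1))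
      = if j = j' then (2:ℝ) ^ d else 0 := by
  have h1 : ∀ ε : Fin d → Bool,
      (∏ i, (if ε i then sg (j i) else 1)) * (∏ i, (if ε i then sg (j' i) else 1))
        = ∏ i, (if ε i then sg (j i) * sg (j' i) else 1) := by
    intro ε
    rw [← Finset.prod_mul_distrib]
    exact Finset.prod_congr rfl fun i _ => by by_cases h : ε i <;> simp [h]
  rw [Finset.sum_congr rfl fun ε _ => h1 ε]
  have h2 := Finset.prod_univ_sum (fun _ : Fin d => (Finset.univ : Finset Bool))
    (fun i b => if b then sg (j i) * sg (j' i) else 1)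
  rw [Fintype.piFinset_univ] at h2
  rw [← h2, Finset.prod_congr rfl fun i _ => sum_bool_orth (j i) (j' i)]
  by_cases h : j = j'
  · subst h
    simp
  · obtain ⟨i, hi⟩ := Function.ne_iff.1 h
    rw [if_neg h]
    exact Finset.prod_eq_zero (Finset.mem_univ i) (by simp [hi])

lemma mem_hCube_of_child {n : ℕ} {k : Fin d → ℕ} (j : Fin d → Fin 2) {x : Euc d}
    (hx : x ∈ hCube d (n + 1) (fun i => 2 * k i + ((j i : ℕ)))) : x ∈ hCube d n k := by
  rw [hCube_eq_iUnion n k]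
  exact Set.mem_iUnion.2 ⟨j, hx⟩

lemma haar_on_child (n : ℕ) (k : Fin d → ℕ) (ε : Fin d → Bool) (j : Fin d → Fin 2) {x : Euc d}
    (hx : x ∈ hCube d (n + 1) (fun i => 2 * k i + ((j i : ℕ)))) :
    haarF d n k ε x = (2:ℝ) ^ (((n * d : ℕ) : ℝ) / 2) * ∏ i, (if ε i then sg (j i) else 1) := by
  have hxp : x ∈ hCube d n k := mem_hCube_of_child j hx
  have hcond : ∀ i, (k i : ℝ) / 2 ^ n ≤ x i ∧ x i < ((k i : ℝ) + 1) / 2 ^ n := hxp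
  rw [haarF, if_pos hcond]
  congr 1
  refine Finset.prod_congr rfl fun i _ => ?_
  by_cases hε : ε i
  · rw [if_pos hε, if_pos hε]
    have hchild := hx i
    have hp : (0:ℝ) < 2 ^ n := by positivity
    have hh : ((2:ℝ) ^ (n+1)) = 2 * 2 ^ n := by ring
    have hji : (j i : ℕ) = 0 ∨ (j i : ℕ) = 1 := by omega
    rcases hji with h0 | h1
    · have hj0 : j i = 0 := Fin.ext h0
      rw [sg, if_pos hj0]
      have h2 := hchild.2
      rw [lt_div_iff₀ (by positivity), hh] at h2
      push_cast [h0] at h2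
      rw [if_pos]
      nlinarith
    · have hj1 : j i ≠ 0 := by intro hc; rw [hc] at h1; simp at h1
      rw [sg, if_neg hj1]
      have h2 := hchild.1
      rw [div_le_iff₀ (by positivity), hh] at h2
      push_cast [h1] at h2
      rw [if_neg]
      push_neg
      nlinarith
  · rw [if_neg hε, if_neg hε]

lemma integral_f_haar (n : ℕ) (k : Fin d → ℕ) (hk : ∀ i, k i < 2 ^ n) (ε : Fin d → Bool)
    {f : Euc d → ℝ} (hintf : IntegrableOn f (uCube d) volume) :
    ∫ x in uCube d, f x * haarF d n k ε x
      = (2:ℝ) ^ (((n * d : ℕ) : ℝ) / 2) * ∑ j : Fin d → Fin 2,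
          (∏ i, (if ε i then sg (j i) else 1)) *
            ∫ x in dyCube d (n + 1) (fun i => 2 * k i + ((j i : ℕ))), f x := by
  have hzero : ∀ x ∉ hCube d n k, f x * haarF d n k ε x = 0 := by
    intro x hx
    have hcond : ¬ ∀ i, (k i : ℝ) / 2 ^ n ≤ x i ∧ x i < ((k i : ℝ) + 1) / 2 ^ n := hx
    rw [haarF, if_neg hcond, mul_zero]
  have hsub2 : hCube d n k ⊆ uCube d :=
    (hCube_subset_dyCube n k).trans (dyCube_subset_uCube n k hk)
  have hchildsub : ∀ j : Fin d → Fin 2,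
      hCube d (n + 1) (fun i => 2 * k i + ((j i : ℕ))) ⊆ uCube d :=
    fun j x hx => hsub2 (mem_hCube_of_child j hx)
  have hintchild : ∀ j : Fin d → Fin 2,
      IntegrableOn (fun x => f x * haarF d n k ε x)
        (hCube d (n + 1) (fun i => 2 * k i + ((j i : ℕ)))) volume := by
    intro j
    have h1 : IntegrableOn (fun x => f x * ((2:ℝ) ^ (((n * d : ℕ) : ℝ) / 2) *
        ∏ i, (if ε i then sg (j i) else 1)))
        (hCube d (n + 1) (fun i => 2 * k i + ((j i : ℕ)))) volume :=
      (hintf.mono_set (hchildsub j)).mul_const _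
    exact h1.congr_fun (fun x hx => by
      show f x * _ = f x * haarF d n k ε x
      rw [haar_on_child n k ε j hx]) (measurableSet_hCube _ _)
  rw [setIntegral_eq_integral_of_forall_compl_eq_zero
      (fun x hx => hzero x (fun h => hx (hsub2 h))),
    ← setIntegral_eq_integral_of_forall_compl_eq_zero hzero,
    show hCube d n k = ⋃ j : Fin d → Fin 2,
      hCube d (n + 1) (fun i => 2 * k i + ((j i : ℕ))) from hCube_eq_iUnion n k,
    integral_iUnion_fintype (fun j => measurableSet_hCube _ _) (children_disjoint n k) hintchild,
    Finset.mul_sum]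
  refine Finset.sum_congr rfl fun j _ => ?_
  rw [setIntegral_congr_fun (measurableSet_hCube _ _)
      (show Set.EqOn (fun x => f x * haarF d n k ε x)
        (fun x => f x * ((2:ℝ) ^ (((n * d : ℕ) : ℝ) / 2) * ∏ i, (if ε i then sg (j i) else 1))) _
        from fun x hx => by
          show f x * haarF d n k ε x = f x * _
          rw [haar_on_child n k ε j hx])]
  rw [integral_mul_const, ← integral_dyCube_hCube (n + 1) _ f]
  ring
def Sseq (g f : Euc d → ℝ) (N : ℕ) : ℝ :=
  ∑ m : Fin d → Fin (2 ^ N), (2:ℝ) ^ (N * d) *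
    ((∫ x in dyCube d N (fun i => (m i : ℕ)), g x) * ∫ x in dyCube d N (fun i => (m i : ℕ)), f x)

lemma level_eq (n : ℕ) {g f : Euc d → ℝ}
    (hintg : IntegrableOn g (uCube d) volume) (hintf : IntegrableOn f (uCube d) volume) :
    youngLevel d (fun n k => ∫ x in dyCube d n k, g x) f n = Sseq g f (n + 1) - Sseq g f n := by
  set c := (2:ℝ) ^ (((n * d : ℕ) : ℝ) / 2) with hc
  have hc2 : c * c = (2:ℝ) ^ (n * d) := by
    rw [hc, ← Real.rpow_add (by norm_num : (0:ℝ) < 2), add_halves, Real.rpow_natCast]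
  have key : ∀ k : Fin d → ℕ, (∀ i, k i < 2 ^ n) →
      (∑ ε ∈ Finset.univ.erase (fun _ : Fin d => false),
        fsCoeff d (fun n k => ∫ x in dyCube d n k, g x) n k ε *
          ∫ x in uCube d, f x * haarF d n k ε x)
      = (∑ j : Fin d → Fin 2, (2:ℝ) ^ ((n+1) * d) *
          ((∫ x in dyCube d (n+1) (fun i => 2 * k i + ((j i : ℕ))), g x) *
           ∫ x in dyCube d (n+1) (fun i => 2 * k i + ((j i : ℕ))), f x))
        - (2:ℝ) ^ (n * d) *
            ((∫ x in dyCube d n k, g x) * ∫ x in dyCube d n k, f x) := by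
    intro k hk
    set W : (Fin d → Fin 2) → ℝ :=
      fun j => ∫ x in dyCube d (n+1) (fun i => 2 * k i + ((j i : ℕ))), g x with hW
    set F : (Fin d → Fin 2) → ℝ :=
      fun j => ∫ x in dyCube d (n+1) (fun i => 2 * k i + ((j i : ℕ))), f x with hF
    have hfs : ∀ ε, fsCoeff d (fun n k => ∫ x in dyCube d n k, g x) n k ε
        = c * ∑ j, (∏ i, (if ε i then sg (j i) else 1)) * W j := by
      intro ε
      rw [fsCoeff, ← hc]
      rfl
    have hb : ∀ ε, (∫ x in uCube d, f x * haarF d n k ε x)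
        = c * ∑ j, (∏ i, (if ε i then sg (j i) else 1)) * F j :=
      fun ε => integral_f_haar n k hk ε hintf
    have expand : ∀ ε : Fin d → Bool,
        (∑ j, (∏ i, (if ε i then sg (j i) else 1)) * W j) *
          (∑ j, (∏ i, (if ε i then sg (j i) else 1)) * F j)
        = ∑ j, ∑ j', ((∏ i, (if ε i then sg (j i) else 1)) *
            (∏ i, (if ε i then sg (j' i) else 1))) * (W j * F j') := by
      intro ε
      rw [Finset.sum_mul_sum]
      exact Finset.sum_congr rfl fun j _ => Finset.sum_congr rfl fun j' _ => by ring
    have hall : (∑ ε : Fin d → Bool,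
        (∑ j, (∏ i, (if ε i then sg (j i) else 1)) * W j) *
          (∑ j, (∏ i, (if ε i then sg (j i) else 1)) * F j))
        = (2:ℝ) ^ d * ∑ j, W j * F j := by
      rw [Finset.sum_congr rfl fun ε _ => expand ε]
      have swap : (∑ ε : Fin d → Bool, ∑ j : Fin d → Fin 2, ∑ j' : Fin d → Fin 2,
            ((∏ i, (if ε i then sg (j i) else 1)) *
              (∏ i, (if ε i then sg (j' i) else 1))) * (W j * F j'))
          = ∑ j : Fin d → Fin 2, ∑ j' : Fin d → Fin 2,
              (∑ ε : Fin d → Bool, (∏ i, (if ε i then sg (j i) else 1)) *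
                (∏ i, (if ε i then sg (j' i) else 1))) * (W j * F j') := by
        rw [Finset.sum_comm]
        refine Finset.sum_congr rfl fun j _ => ?_
        rw [Finset.sum_comm]
        refine Finset.sum_congr rfl fun j' _ => ?_
        rw [Finset.sum_mul]
      rw [swap]
      rw [Finset.sum_congr rfl fun j _ => Finset.sum_congr rfl fun j' _ => by rw [orth j j']]
      rw [Finset.mul_sum]
      refine Finset.sum_congr rfl fun j _ => ?_
      rw [Finset.sum_eq_single j]
      · rw [if_pos rfl]
      · intro b _ hb
        rw [if_neg (fun h => hb h.symm), zero_mul]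
      · intro h
        exact absurd (Finset.mem_univ j) h
    have hε₀ : ∀ j : Fin d → Fin 2,
        (∏ i, (if (fun _ : Fin d => false) i then sg (j i) else 1)) = (1:ℝ) := by
      intro j; simp
    have hWsum : ∑ j, W j = ∫ x in dyCube d n k, g x :=
      (integral_split n k (hintg.mono_set (dyCube_subset_uCube n k hk))).symm
    have hFsum : ∑ j, F j = ∫ x in dyCube d n k, f x :=
      (integral_split n k (hintf.mono_set (dyCube_subset_uCube n k hk))).symm
    rw [Finset.sum_erase_eq_sub (Finset.mem_univ (fun _ : Fin d => false))]
    rw [Finset.sum_congr rfl fun ε _ => by rw [hfs ε, hb ε]]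
    have h1 : (∑ ε : Fin d → Bool,
        (c * ∑ j, (∏ i, (if ε i then sg (j i) else 1)) * W j) *
          (c * ∑ j, (∏ i, (if ε i then sg (j i) else 1)) * F j))
        = c * c * ((2:ℝ) ^ d * ∑ j, W j * F j) := by
      rw [show (∑ ε : Fin d → Bool,
          (c * ∑ j, (∏ i, (if ε i then sg (j i) else 1)) * W j) *
            (c * ∑ j, (∏ i, (if ε i then sg (j i) else 1)) * F j))
        = c * c * (∑ ε : Fin d → Bool,
          (∑ j, (∏ i, (if ε i then sg (j i) else 1)) * W j) *
            (∑ j, (∏ i, (if ε i then sg (j i) else 1)) * F j)) from by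
          rw [Finset.mul_sum]
          exact Finset.sum_congr rfl fun ε _ => by ring]
      rw [hall]
    have h2 : (fsCoeff d (fun n k => ∫ x in dyCube d n k, g x) n k (fun _ => false)) *
        (∫ x in uCube d, f x * haarF d n k (fun _ => false) x)
        = c * c * ((∫ x in dyCube d n k, g x) * ∫ x in dyCube d n k, f x) := by
      rw [hfs, hb]
      simp only [Bool.false_eq_true, if_false, Finset.prod_const_one, one_mul]
      rw [hWsum, hFsum]
      ring
    rw [h1, h2, hc2]
    rw [show (∑ j : Fin d → Fin 2, (2:ℝ) ^ ((n+1) * d) * (W j * F j))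
      = (2:ℝ) ^ ((n+1) * d) * ∑ j, W j * F j from (Finset.mul_sum _ _ _).symm]
    have hp : (2:ℝ) ^ ((n+1) * d) = 2 ^ (n * d) * 2 ^ d := by
      rw [add_mul, one_mul, pow_add]
    rw [hp]
    ring
  rw [youngLevel]
  rw [Finset.sum_congr rfl fun m _ => key (fun i => ((m i : ℕ))) (fun i => (m i).isLt)]
  rw [Finset.sum_sub_distrib]
  congr 1
  rw [show Sseq g f (n+1) = ∑ m : Fin d → Fin (2 ^ (n+1)),
      (fun k' => (2:ℝ) ^ ((n+1) * d) *
        ((∫ x in dyCube d (n+1) k', g x) * ∫ x in dyCube d (n+1) k', f x)) (fun i => ((m i : ℕ)))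
      from rfl]
  rw [sum_gen_succ n (fun k' => (2:ℝ) ^ ((n+1) * d) *
      ((∫ x in dyCube d (n+1) k', g x) * ∫ x in dyCube d (n+1) k', f x))]
lemma norm_sub_le_cube {N : ℕ} {k : Fin d → ℕ} {x y : Euc d}
    (hx : x ∈ dyCube d N k) (hy : y ∈ dyCube d N k) :
    ‖x - y‖ ≤ Real.sqrt d * ((2:ℝ) ^ N)⁻¹ := by
  rw [EuclideanSpace.norm_eq]
  have hcoord : ∀ i, ‖(x - y) i‖ ≤ ((2:ℝ) ^ N)⁻¹ := by
    intro i
    have h1 := hx i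
    have h2 := hy i
    have hba : ((k i : ℝ) + 1) / 2 ^ N - (k i : ℝ) / 2 ^ N = ((2:ℝ) ^ N)⁻¹ := by
      field_simp; ring
    have hsub : (x - y) i = x i - y i := by
      simp [PiLp.sub_apply]
    rw [hsub, Real.norm_eq_abs, abs_le]
    constructor <;> [linarith [h1.1, h2.2]; linarith [h1.2, h2.1]]
  have hsq : ∀ i, ‖(x - y) i‖ ^ 2 ≤ (((2:ℝ) ^ N)⁻¹) ^ 2 := fun i =>
    pow_le_pow_left₀ (norm_nonneg _) (hcoord i) 2
  calc Real.sqrt (∑ i, ‖(x - y) i‖ ^ 2)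
      ≤ Real.sqrt (∑ _i : Fin d, (((2:ℝ) ^ N)⁻¹) ^ 2) :=
        Real.sqrt_le_sqrt (Finset.sum_le_sum fun i _ => hsq i)
    _ = Real.sqrt ((d : ℝ) * (((2:ℝ) ^ N)⁻¹) ^ 2) := by
        rw [Finset.sum_const, Finset.card_univ, Fintype.card_fin, nsmul_eq_mul]
    _ = Real.sqrt d * ((2:ℝ) ^ N)⁻¹ := by
        rw [Real.sqrt_mul (Nat.cast_nonneg d), Real.sqrt_sq (by positivity)]

lemma two_pow_mul_dyVol (N : ℕ) : (2:ℝ) ^ (N * d) * dyVol d N = 1 := by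
  rw [dyVol, mul_inv_cancel₀ (by positivity)]

lemma Sseq_dist {β M : ℝ} (hβ0 : 0 < β) (hM : 0 ≤ M) {g f : Euc d → ℝ}
    (hintg : IntegrableOn g (uCube d) volume)
    (hintf : IntegrableOn f (uCube d) volume)
    (hintfg : IntegrableOn (fun x => f x * g x) (uCube d) volume)
    (hf : ∀ x ∈ uCube d, ∀ y ∈ uCube d, |f x - f y| ≤ M * ‖x - y‖ ^ β) (N : ℕ) :
    |Sseq g f N - ∫ x in uCube d, f x * g x| ≤
      M * (Real.sqrt d * ((2:ℝ) ^ N)⁻¹) ^ β * ∫ x in uCube d, |g x| := by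
  set C : ℝ := M * (Real.sqrt d * ((2:ℝ) ^ N)⁻¹) ^ β with hC
  have hC0 : 0 ≤ C := by
    rw [hC]; positivity
  -- per-cube estimate
  have percube : ∀ m : Fin d → Fin (2 ^ N),
      |(2:ℝ) ^ (N * d) * ((∫ x in dyCube d N (fun i => (m i : ℕ)), g x) *
          ∫ x in dyCube d N (fun i => (m i : ℕ)), f x)
        - ∫ x in dyCube d N (fun i => (m i : ℕ)), f x * g x|
      ≤ C * ∫ x in dyCube d N (fun i => (m i : ℕ)), |g x| := by
    intro m
    set K := dyCube d N (fun i => (m i : ℕ)) with hK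
    have hKsub : K ⊆ uCube d := dyCube_subset_uCube N _ fun i => (m i).isLt
    have hKmeas : MeasurableSet K := measurableSet_dyCube N _
    have hKvol : (volume K).toReal = dyVol d N := by
      rw [hK, volume_dyCube, ENNReal.toReal_ofReal (by rw [dyVol]; positivity)]
    have hKfin : volume K < ⊤ := by
      rw [hK, volume_dyCube]; exact ENNReal.ofReal_lt_top
    have hintfK : IntegrableOn f K volume := hintf.mono_set hKsub
    have hintgK : IntegrableOn g K volume := hintg.mono_set hKsub
    have hintfgK : IntegrableOn (fun x => f x * g x) K volume := hintfg.mono_set hKsub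
    set A : ℝ := (2:ℝ) ^ (N * d) * ∫ x in K, f x with hA
    -- |A - f x| ≤ C on K
    have havg : ∀ x ∈ K, |A - f x| ≤ C := by
      intro x hxK
      have hdiff : A - f x = (2:ℝ) ^ (N * d) * ∫ y in K, (f y - f x) := by
        rw [integral_sub hintfK (integrableOn_const hKfin.ne),
          setIntegral_const, smul_eq_mul, measureReal_def, hKvol, hA, mul_sub]
        have h1 : (2:ℝ) ^ (N * d) * (dyVol d N * f x) = f x := by
          rw [← mul_assoc, two_pow_mul_dyVol, one_mul]
        rw [h1]
      have hbound : ‖∫ y in K, (f y - f x)‖ ≤ C * (volume K).toReal := by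
        apply norm_setIntegral_le_of_norm_le_const hKfin
        · intro y hyK
          rw [Real.norm_eq_abs]
          calc |f y - f x| ≤ M * ‖y - x‖ ^ β := hf y (hKsub hyK) x (hKsub hxK)
            _ ≤ M * (Real.sqrt d * ((2:ℝ) ^ N)⁻¹) ^ β := by
                apply mul_le_mul_of_nonneg_left _ hM
                exact Real.rpow_le_rpow (norm_nonneg _) (norm_sub_le_cube hyK hxK) hβ0.le
            _ = C := rfl
      rw [hdiff, abs_mul, abs_of_nonneg (by positivity : (0:ℝ) ≤ (2:ℝ) ^ (N * d))]
      rw [Real.norm_eq_abs] at hbound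
      calc (2:ℝ) ^ (N * d) * |∫ y in K, (f y - f x)|
          ≤ (2:ℝ) ^ (N * d) * (C * (volume K).toReal) :=
            mul_le_mul_of_nonneg_left hbound (by positivity)
        _ = C := by
            rw [hKvol, show (2:ℝ) ^ (N * d) * (C * dyVol d N)
              = C * ((2:ℝ) ^ (N * d) * dyVol d N) from by ring, two_pow_mul_dyVol, mul_one]
    -- rewrite the first term as ∫ A * g
    have hterm : (2:ℝ) ^ (N * d) * ((∫ x in K, g x) * ∫ x in K, f x) = ∫ x in K, A * g x := by
      rw [integral_const_mul, hA]; ring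
    rw [hterm]
    rw [← integral_sub (hintgK.const_mul A) hintfgK]
    have habs : |∫ x in K, (A * g x - f x * g x)| ≤ ∫ x in K, |A * g x - f x * g x| := by
      rw [← Real.norm_eq_abs]
      refine (norm_integral_le_integral_norm _).trans_eq ?_
      simp [Real.norm_eq_abs]
    refine habs.trans ?_
    rw [← integral_const_mul]
    apply setIntegral_mono_on ((hintgK.const_mul A).sub hintfgK).abs
      (hintgK.abs.const_mul C) hKmeas
    intro x hxK
    simp only [Pi.sub_apply]
    have : A * g x - f x * g x = (A - f x) * g x := by ring
    rw [this, abs_mul]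
    exact mul_le_mul_of_nonneg_right (havg x hxK) (abs_nonneg _)
  -- assemble
  have hpartfg := integral_partition N hintfg
  have hpartabs := integral_partition N hintg.abs
  rw [Sseq, hpartfg, ← Finset.sum_sub_distrib]
  calc |∑ m : Fin d → Fin (2 ^ N), ((2:ℝ) ^ (N * d) *
        ((∫ x in dyCube d N (fun i => (m i : ℕ)), g x) *
          ∫ x in dyCube d N (fun i => (m i : ℕ)), f x)
        - ∫ x in dyCube d N (fun i => (m i : ℕ)), f x * g x)|
      ≤ ∑ m : Fin d → Fin (2 ^ N), |(2:ℝ) ^ (N * d) *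
        ((∫ x in dyCube d N (fun i => (m i : ℕ)), g x) *
          ∫ x in dyCube d N (fun i => (m i : ℕ)), f x)
        - ∫ x in dyCube d N (fun i => (m i : ℕ)), f x * g x| :=
        Finset.abs_sum_le_sum_abs _ _
    _ ≤ ∑ m : Fin d → Fin (2 ^ N), C * ∫ x in dyCube d N (fun i => (m i : ℕ)), |g x| :=
        Finset.sum_le_sum fun m _ => percube m
    _ = C * ∫ x in uCube d, |g x| := by
        rw [← Finset.mul_sum]
        congr 1
        rw [hpartabs]

end YoungAux

/-- **Consistency of the Young integral with densities** (Theorem 4.2(A)):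
for `g ∈ L^{1/(1-γ)}([0,1]^d)` and `ω(K) = ∫_K g`, the function `ω` is additive with
`‖ω‖_γ ≤ ‖g‖_{L^{1/(1-γ)}}`, and the Young integral series of a `β`-Hölder continuous `f`
against `ω` converges absolutely to `∫ f g`. -/
theorem young_integral_density (d : ℕ) (hd : 0 < d) (β γ : ℝ)
    (hβ0 : 0 < β) (hβ1 : β < 1) (hγ0 : 0 < γ) (hγ1 : γ < 1)
    (hγd : ((d : ℝ) - 1) / d < γ) (hβγ : (d : ℝ) < β + d * γ)
    (g : Euc d → ℝ)
    (hg : MemLp g (ENNReal.ofReal (1 / (1 - γ))) (volume.restrict (uCube d))) :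
    IsAdditiveDy d (fun n k => ∫ x in dyCube d n k, g x) ∧
    (∀ n (k : Fin d → ℕ), (∀ i, k i < 2 ^ n) →
      ENNReal.ofReal |∫ x in dyCube d n k, g x| ≤
        eLpNorm g (ENNReal.ofReal (1 / (1 - γ))) (volume.restrict (uCube d)) *
          ENNReal.ofReal (dyVol d n ^ γ)) ∧
    ∀ (f : Euc d → ℝ) (L : ℝ),
      (∀ x ∈ uCube d, ∀ y ∈ uCube d, |f x - f y| ≤ L * ‖x - y‖ ^ β) →
      Summable (fun n => |youngLevel d (fun n k => ∫ x in dyCube d n k, g x) f n|) ∧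
      (∫ x in uCube d, g x) * (∫ x in uCube d, f x) +
          (∑' n : ℕ, youngLevel d (fun n k => ∫ x in dyCube d n k, g x) f n) =
        ∫ x in uCube d, f x * g x := by
  have h1γ : (0:ℝ) < 1 - γ := by linarith
  have hp1 : (1:ℝ≥0∞) ≤ ENNReal.ofReal (1 / (1 - γ)) := by
    rw [ENNReal.one_le_ofReal, le_div_iff₀ h1γ]
    linarith
  have hintg : IntegrableOn g (uCube d) volume := hg.integrable hp1
  refine ⟨?_, fun n k hk => holder_bound hγ0 hγ1 hg n k hk, ?_⟩
  · intro n k hk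
    exact integral_split n k (hintg.mono_set (dyCube_subset_uCube n k hk))
  intro f L hf
  set M := |L| with hMdef
  have hM : 0 ≤ M := abs_nonneg L
  have hf' : ∀ x ∈ uCube d, ∀ y ∈ uCube d, |f x - f y| ≤ M * ‖x - y‖ ^ β := by
    intro x hx y hy
    refine (hf x hx y hy).trans ?_
    exact mul_le_mul_of_nonneg_right (le_abs_self L) (Real.rpow_nonneg (norm_nonneg _) β)
  have hintf : IntegrableOn f (uCube d) volume := integrableOn_f hβ0 hf'
  have hmeasU : MeasurableSet (uCube d) := measurableSet_dyCube 0 _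
  have hintfg : IntegrableOn (fun x => f x * g x) (uCube d) volume := by
    obtain ⟨Cf, hCf⟩ := isCompact_uCube.exists_bound_of_continuousOn (holder_continuousOn hβ0 hf')
    refine Integrable.bdd_mul (c := Cf) hintg
      ((holder_continuousOn hβ0 hf').aestronglyMeasurable hmeasU) ?_
    exact (ae_restrict_mem hmeasU).mono fun x hx => hCf x hx
  set ω : ∀ _ : ℕ, (Fin d → ℕ) → ℝ := fun n k => ∫ x in dyCube d n k, g x with hω
  set I : ℝ := ∫ x in uCube d, f x * g x with hI
  set Gn : ℝ := ∫ x in uCube d, |g x| with hGn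
  have hGn0 : 0 ≤ Gn := by
    rw [hGn]; positivity
  set ρ : ℝ := ((2:ℝ)⁻¹) ^ β with hρ
  have hρ0 : 0 ≤ ρ := Real.rpow_nonneg (by norm_num) β
  have hρ1 : ρ < 1 := Real.rpow_lt_one (by norm_num) (by norm_num) hβ0
  set D : ℝ := M * Real.sqrt d ^ β * Gn with hD
  have hD0 : 0 ≤ D := by
    rw [hD]
    have : (0:ℝ) ≤ Real.sqrt d ^ β := Real.rpow_nonneg (Real.sqrt_nonneg _) β
    positivity
  have hpow : ∀ N : ℕ, (((2:ℝ) ^ N)⁻¹) ^ β = ρ ^ N := by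
    intro N
    rw [hρ, ← inv_pow, ← Real.rpow_natCast ((2:ℝ)⁻¹) N,
      ← Real.rpow_natCast (((2:ℝ)⁻¹) ^ β) N, ← Real.rpow_mul (by norm_num),
      ← Real.rpow_mul (by norm_num), mul_comm]
  have hbd : ∀ N, |Sseq g f N - I| ≤ D * ρ ^ N := by
    intro N
    refine (Sseq_dist hβ0 hM hintg hintf hintfg hf' N).trans_eq ?_
    rw [Real.mul_rpow (Real.sqrt_nonneg _) (by positivity), hpow N, hD]
    ring
  have hgeom : Summable (fun N : ℕ => D * ρ ^ N) :=
    (summable_geometric_of_lt_one hρ0 hρ1).mul_left D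
  have hY : ∀ n, youngLevel d ω f n = Sseq g f (n + 1) - Sseq g f n :=
    fun n => level_eq n hintg hintf
  have hYabs : ∀ n, |youngLevel d ω f n| ≤ D * ρ ^ (n + 1) + D * ρ ^ n := by
    intro n
    rw [hY n]
    calc |Sseq g f (n+1) - Sseq g f n|
        = |(Sseq g f (n+1) - I) + (I - Sseq g f n)| := by ring_nf
      _ ≤ |Sseq g f (n+1) - I| + |I - Sseq g f n| := abs_add_le _ _
      _ ≤ D * ρ ^ (n+1) + D * ρ ^ n := by
          rw [abs_sub_comm I (Sseq g f n)]
          exact add_le_add (hbd (n+1)) (hbd n)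
  have hsumabs : Summable (fun n => |youngLevel d ω f n|) := by
    refine Summable.of_nonneg_of_le (fun n => abs_nonneg _) hYabs ?_
    exact ((summable_nat_add_iff 1).2 hgeom).add hgeom
  refine ⟨hsumabs, ?_⟩
  have hS0 : Sseq g f 0 = (∫ x in uCube d, g x) * ∫ x in uCube d, f x := by
    rw [Sseq]
    rw [Finset.sum_congr rfl (fun m _ => by
      rw [show (fun i => ((m i : ℕ))) = fun _ : Fin d => (0:ℕ) from
        funext fun i => by have := (m i).isLt; omega])]
    rw [Finset.sum_const, Finset.card_univ,
      show Fintype.card (Fin d → Fin (2 ^ 0)) = 1 from by simp, one_smul,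
      Nat.zero_mul, pow_zero, one_mul]
    rfl
  have htendS : Tendsto (fun N => Sseq g f N) atTop (nhds I) := by
    rw [tendsto_iff_dist_tendsto_zero]
    have h0 : Tendsto (fun N : ℕ => D * ρ ^ N) atTop (nhds 0) := by
      rw [show (0:ℝ) = D * 0 from (mul_zero D).symm]
      exact (tendsto_pow_atTop_nhds_zero_of_lt_one hρ0 hρ1).const_mul D
    refine squeeze_zero (fun N => dist_nonneg) (fun N => ?_) h0
    rw [Real.dist_eq]
    exact hbd N
  have hpartial : ∀ N, ∑ n ∈ Finset.range N, youngLevel d ω f n = Sseq g f N - Sseq g f 0 := by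
    intro N
    rw [Finset.sum_congr rfl fun n _ => hY n]
    exact Finset.sum_range_sub (fun N => Sseq g f N) N
  have hsumY : Summable (youngLevel d ω f) := hsumabs.of_abs
  have hhs : HasSum (youngLevel d ω f) (I - Sseq g f 0) := by
    rw [hsumY.hasSum_iff_tendsto_nat]
    rw [show (fun N => ∑ n ∈ Finset.range N, youngLevel d ω f n)
      = fun N => Sseq g f N - Sseq g f 0 from funext hpartial]
    exact htendS.sub_const _
  rw [hhs.tsum_eq, ← hS0]
  ring

end
end

section
/- Flux of a Hölder continuous C¹ vector field over dyadic cubes (computation of paragraph 7.1). Let d ≥ 1, γ ∈ ((d−1)/d, 1], and set α = dγ − (d − 1) ∈ (0,1]. There exists a constant C ≥ 0, depending only on d and γ, such that for every vector field v : U → ℝ^d that is continuously differentiable on an open set U ⊇ [0,1]^d and whose restriction to [0,1]^d satisfies Lip^α(v|_{[0,1]^d}) ≤ L, and for every dyadic cube K ⊂ [0,1]^d, one has |∫_K div v| ≤ C · L · |K|^γ, where div v = Σ_{i=1}^d ∂v_i/∂x_i. -/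
open MeasureTheory Filter
open scoped BigOperators ENNReal Classical

noncomputable section

/-- The pointwise divergence `Σ_i ∂v_i/∂x_i` of a vector field on `ℝ^d`. -/
def divg (d : ℕ) (v : Euc d → Euc d) (x : Euc d) : ℝ :=
  ∑ i, fderiv ℝ v x (EuclideanSpace.single i (1 : ℝ)) i

open Set

lemma abs_coord_le_norm {d : ℕ} (w : Euc d) (i : Fin d) : |w i| ≤ ‖w‖ := by
  rw [EuclideanSpace.norm_eq]
  refine le_trans (le_of_eq ?_)
    (Real.sqrt_le_sqrt (Finset.single_le_sum (f := fun j => ‖w j‖ ^ 2)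
      (fun j _ => by positivity) (Finset.mem_univ i)))
  show |w i| = Real.sqrt (‖w i‖ ^ 2)
  rw [Real.norm_eq_abs, sq_abs, Real.sqrt_sq_eq_abs]

lemma norm_insertNth_sub {m : ℕ} (i : Fin (m + 1)) (c c' : ℝ) (x : Fin m → ℝ) :
    ‖((EuclideanSpace.equiv (Fin (m + 1)) ℝ).symm (i.insertNth c x) -
      (EuclideanSpace.equiv (Fin (m + 1)) ℝ).symm (i.insertNth c' x) : Euc (m + 1))‖
      = |c - c'| := by
  rw [EuclideanSpace.norm_eq]
  have h : ∀ j, ‖((EuclideanSpace.equiv (Fin (m + 1)) ℝ).symm (i.insertNth c x) -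
      (EuclideanSpace.equiv (Fin (m + 1)) ℝ).symm (i.insertNth c' x) : Euc (m + 1)) j‖ ^ 2
      = ((i.insertNth c x : Fin (m+1) → ℝ) j - (i.insertNth c' x : Fin (m+1) → ℝ) j) ^ 2 := by
    intro j; rw [Real.norm_eq_abs, sq_abs]; rfl
  simp_rw [h]
  rw [Fin.sum_univ_succAbove (fun j => ((i.insertNth c x : Fin (m+1) → ℝ) j - (i.insertNth c' x : Fin (m+1) → ℝ) j) ^ 2) i]
  simp [Real.sqrt_sq_eq_abs]


/-- **Flux of a Hölder continuous `C¹` vector field over dyadic cubes**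
(computation of paragraph 7.1), with `α = dγ - (d-1)`. -/
theorem flux_holder_field (d : ℕ) (hd : 0 < d) (γ : ℝ)
    (hγ : ((d : ℝ) - 1) / d < γ) (hγ1 : γ ≤ 1) :
    ∃ C : ℝ, 0 ≤ C ∧ ∀ (v : Euc d → Euc d) (U : Set (Euc d)),
      IsOpen U → uCube d ⊆ U → ContDiffOn ℝ 1 v U →
      ∀ L : ℝ,
        (∀ x ∈ uCube d, ∀ y ∈ uCube d,
          ‖v x - v y‖ ≤ L * ‖x - y‖ ^ ((d : ℝ) * γ - ((d : ℝ) - 1))) →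
        ∀ n (k : Fin d → ℕ), (∀ i, k i < 2 ^ n) →
          |∫ x in dyCube d n k, divg d v x| ≤ C * L * dyVol d n ^ γ := by
  obtain ⟨m, rfl⟩ : ∃ m, d = m + 1 := ⟨d - 1, (Nat.succ_pred_eq_of_pos hd).symm⟩
  have hdR : (0 : ℝ) < ((m + 1 : ℕ) : ℝ) := by positivity
  refine ⟨((m + 1 : ℕ) : ℝ), by positivity, ?_⟩
  intro v U hU hsub hv L hL n k hk
  set α : ℝ := ((m + 1 : ℕ) : ℝ) * γ - (((m + 1 : ℕ) : ℝ) - 1) with hαdef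
  have hα : 0 < α := by
    have h := (div_lt_iff₀ hdR).mp hγ
    rw [hαdef]; nlinarith
  set r : ℝ := ((2 : ℝ) ^ n)⁻¹ with hrdef
  have hr0 : (0 : ℝ) < r := by positivity
  set a : Fin (m + 1) → ℝ := fun i => (k i : ℝ) / 2 ^ n with hadef
  set b : Fin (m + 1) → ℝ := fun i => ((k i : ℝ) + 1) / 2 ^ n with hbdef
  have hle : a ≤ b := by
    intro i
    simp only [hadef, hbdef]
    gcongr
    linarith
  have hba : ∀ i, b i - a i = r := by
    intro i
    rw [hadef, hbdef, hrdef]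
    field_simp
    ring
  have ha0 : ∀ i, 0 ≤ a i := fun i => by rw [hadef]; positivity
  have hb1 : ∀ i, b i ≤ 1 := by
    intro i
    rw [hbdef, div_le_one (by positivity)]
    have := hk i
    have : (k i : ℝ) + 1 ≤ ((2 : ℕ) ^ n : ℕ) := by exact_mod_cast Nat.succ_le_of_lt this
    push_cast at this ⊢
    linarith
  set eL : Euc (m + 1) ≃L[ℝ] (Fin (m + 1) → ℝ) := EuclideanSpace.equiv (Fin (m + 1)) ℝ with heL
  have hcube : dyCube (m + 1) n k = (MeasurableEquiv.toLp 2 (Fin (m + 1) → ℝ)).symm ⁻¹' (Icc a b) := by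
    ext x
    simp only [dyCube, mem_setOf_eq, mem_preimage, mem_Icc, Pi.le_def, ← forall_and]
    rfl
  have hIccU : ∀ y ∈ Icc a b, (eL.symm y : Euc (m + 1)) ∈ uCube (m + 1) := by
    intro y hy i
    have h1 := hy.1 i
    have h2 := hy.2 i
    have e1 : ((0 : ℕ) : ℝ) / 2 ^ (0 : ℕ) = 0 := by norm_num
    have e2 : (((0 : ℕ) : ℝ) + 1) / 2 ^ (0 : ℕ) = 1 := by norm_num
    rw [e1, e2]
    constructor
    · exact le_trans (ha0 i) h1
    · exact le_trans h2 (hb1 i)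
  have hdy_sub : dyCube (m + 1) n k ⊆ uCube (m + 1) := by
    intro x hx
    rw [hcube] at hx
    exact hIccU _ hx
  have hIccsub : ∀ y ∈ Icc a b, (eL.symm y : Euc (m + 1)) ∈ U := fun y hy => hsub (hIccU y hy)
  -- transported function and derivative
  set f : (Fin (m + 1) → ℝ) → (Fin (m + 1) → ℝ) := fun y => eL (v (eL.symm y)) with hfdef
  set f' : (Fin (m + 1) → ℝ) → ((Fin (m + 1) → ℝ) →L[ℝ] (Fin (m + 1) → ℝ)) :=
    fun y => ((eL : Euc (m + 1) →L[ℝ] (Fin (m + 1) → ℝ)).comp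
      ((fderiv ℝ v (eL.symm y)).comp (eL.symm : (Fin (m + 1) → ℝ) →L[ℝ] Euc (m + 1)))) with hf'def
  have hdiveq : ∀ y : Fin (m + 1) → ℝ, (∑ i, f' y (Pi.single i 1) i) = divg (m + 1) v (eL.symm y) := by
    intro y
    rfl
  have hvc : ContinuousOn v U := hv.continuousOn
  have hfc : ContinuousOn f (Icc a b) := by
    refine eL.continuous.comp_continuousOn ?_
    exact hvc.comp eL.symm.continuous.continuousOn hIccsub
  have hdiff : ∀ x ∈ ((Set.pi univ fun i => Ioo (a i) (b i)) \ (∅ : Set (Fin (m+1) → ℝ))),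
      HasFDerivAt f (f' x) x := by
    intro x hx
    have hxI : x ∈ Icc a b := by
      rcases hx with ⟨hx, -⟩
      exact ⟨fun i => (hx i (mem_univ i)).1.le, fun i => (hx i (mem_univ i)).2.le⟩
    have hxU : (eL.symm x : Euc (m + 1)) ∈ U := hIccsub x hxI
    have hvd : HasFDerivAt v (fderiv ℝ v (eL.symm x)) (eL.symm x) :=
      ((hv.contDiffAt (hU.mem_nhds hxU)).differentiableAt one_ne_zero).hasFDerivAt
    have h1 : HasFDerivAt (fun y : Fin (m+1) → ℝ => v (eL.symm y))
        ((fderiv ℝ v (eL.symm x)).comp (eL.symm : (Fin (m + 1) → ℝ) →L[ℝ] Euc (m + 1))) x :=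
      hvd.comp x (eL.symm : (Fin (m + 1) → ℝ) →L[ℝ] Euc (m + 1)).hasFDerivAt
    exact (eL : Euc (m + 1) →L[ℝ] (Fin (m + 1) → ℝ)).hasFDerivAt.comp x h1
  have hdivc : ContinuousOn (divg (m + 1) v) U := by
    have hDc : ContinuousOn (fderiv ℝ v) U := hv.continuousOn_fderiv_of_isOpen hU le_rfl
    unfold divg
    refine continuousOn_finset_sum _ (fun i _ => ?_)
    exact (EuclideanSpace.proj i).continuous.comp_continuousOn (hDc.clm_apply continuousOn_const)
  have Hi : IntegrableOn (fun x => ∑ i, f' x (Pi.single i 1) i) (Icc a b) volume := by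
    have : (fun x => ∑ i, f' x (Pi.single i 1) i) = fun x => divg (m + 1) v (eL.symm x) :=
      funext hdiveq
    rw [this]
    exact (hdivc.comp eL.symm.continuous.continuousOn hIccsub).integrableOn_compact isCompact_Icc
  have hdivthm := integral_divergence_of_hasFDerivAt_off_countable a b hle f f'
    ∅ countable_empty hfc hdiff Hi
  have hset : ∫ x in dyCube (m + 1) n k, divg (m + 1) v x
      = ∫ y in Icc a b, divg (m + 1) v (eL.symm y) := by
    rw [hcube]
    exact ((EuclideanSpace.volume_preserving_symm_measurableEquiv_toLp (Fin (m + 1))).setIntegral_preimage_emb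
      (MeasurableEquiv.toLp 2 (Fin (m + 1) → ℝ)).symm.measurableEmbedding
      (fun y => divg (m + 1) v (eL.symm y)) (Icc a b))
  have hIeq : ∫ y in Icc a b, divg (m + 1) v (eL.symm y)
      = ∫ y in Icc a b, ∑ i, f' y (Pi.single i 1) i := by
    simp_rw [hdiveq]
  have hface : ∀ i : Fin (m + 1),
      |(∫ x in Icc (a ∘ i.succAbove) (b ∘ i.succAbove), f (i.insertNth (b i) x) i) -
        ∫ x in Icc (a ∘ i.succAbove) (b ∘ i.succAbove), f (i.insertNth (a i) x) i|
        ≤ (L * r ^ α) * r ^ m := by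
    intro i
    have hfacevol : (volume (Icc (a ∘ i.succAbove) (b ∘ i.succAbove))).toReal = r ^ m := by
      simp only [Function.comp_def]
      rw [Real.volume_Icc_pi_toReal (fun j => hle (i.succAbove j))]
      rw [Finset.prod_congr rfl (fun j _ => hba (i.succAbove j)), Finset.prod_const]
      simp [Finset.card_univ]
    have hcont : ∀ c : ℝ, a i ≤ c → c ≤ b i → ContinuousOn
        (fun x : Fin m → ℝ => f (i.insertNth c x) i) (Icc (a ∘ i.succAbove) (b ∘ i.succAbove)) := by
      intro c h1 h2
      have hmaps : MapsTo (fun x : Fin m → ℝ => i.insertNth c x)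
          (Icc (a ∘ i.succAbove) (b ∘ i.succAbove)) (Icc a b) := by
        intro x hx
        rw [Fin.insertNth_mem_Icc]
        exact ⟨⟨h1, h2⟩, hx⟩
      have hic : Continuous (fun x : Fin m → ℝ => (i.insertNth c x : Fin (m + 1) → ℝ)) :=
        continuous_const.finInsertNth i continuous_id
      exact (continuous_apply i).comp_continuousOn (hfc.comp hic.continuousOn hmaps)
    have hI1 : IntegrableOn (fun x : Fin m → ℝ => f (i.insertNth (b i) x) i)
        (Icc (a ∘ i.succAbove) (b ∘ i.succAbove)) volume :=
      (hcont (b i) (hle i) le_rfl).integrableOn_compact isCompact_Icc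
    have hI2 : IntegrableOn (fun x : Fin m → ℝ => f (i.insertNth (a i) x) i)
        (Icc (a ∘ i.succAbove) (b ∘ i.succAbove)) volume :=
      (hcont (a i) le_rfl (hle i)).integrableOn_compact isCompact_Icc
    rw [← integral_sub hI1 hI2, ← Real.norm_eq_abs]
    calc ‖∫ x in Icc (a ∘ i.succAbove) (b ∘ i.succAbove),
          (f (i.insertNth (b i) x) i - f (i.insertNth (a i) x) i)‖
        ≤ (L * r ^ α) * (volume (Icc (a ∘ i.succAbove) (b ∘ i.succAbove))).toReal := by
          refine norm_setIntegral_le_of_norm_le_const isCompact_Icc.measure_lt_top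
            ?_
          intro x hx
          have hmem : ∀ c : ℝ, a i ≤ c → c ≤ b i → (i.insertNth c x) ∈ Icc a b := by
            intro c h1 h2
            rw [Fin.insertNth_mem_Icc]; exact ⟨⟨h1, h2⟩, hx⟩
          have hp := hIccU _ (hmem (b i) (hle i) le_rfl)
          have hq := hIccU _ (hmem (a i) le_rfl (hle i))
          have key : f (i.insertNth (b i) x) i - f (i.insertNth (a i) x) i
              = (v (eL.symm (i.insertNth (b i) x)) - v (eL.symm (i.insertNth (a i) x)) : Euc (m+1)) i := rfl
          rw [Real.norm_eq_abs, key]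
          have hnorm : ‖(eL.symm (i.insertNth (b i) x) - eL.symm (i.insertNth (a i) x) : Euc (m+1))‖ = r := by
            rw [heL, norm_insertNth_sub, hba i, abs_of_pos hr0]
          calc |(v (eL.symm (i.insertNth (b i) x)) - v (eL.symm (i.insertNth (a i) x)) : Euc (m+1)) i|
              ≤ ‖(v (eL.symm (i.insertNth (b i) x)) - v (eL.symm (i.insertNth (a i) x)) : Euc (m+1))‖ :=
                abs_coord_le_norm _ i
            _ ≤ L * ‖(eL.symm (i.insertNth (b i) x) - eL.symm (i.insertNth (a i) x) : Euc (m+1))‖ ^ α :=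
                hL _ hp _ hq
            _ = L * r ^ α := by rw [hnorm]
      _ = (L * r ^ α) * r ^ m := by rw [hfacevol]
  have habs : |∫ x in dyCube (m + 1) n k, divg (m + 1) v x|
      ≤ ((m + 1 : ℕ) : ℝ) * ((L * r ^ α) * r ^ m) := by
    rw [hset, hIeq, hdivthm]
    refine le_trans (Finset.abs_sum_le_sum_abs _ _) ?_
    refine le_trans (Finset.sum_le_sum (fun i _ => hface i)) ?_
    rw [Finset.sum_const, Finset.card_univ, Fintype.card_fin, nsmul_eq_mul]
  refine le_trans habs (le_of_eq ?_)
  have h1 : dyVol (m + 1) n = r ^ (m + 1) := by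
    rw [dyVol, hrdef, pow_mul, ← inv_pow]
  have h2 : (r ^ (m + 1) : ℝ) ^ γ = r ^ (((m + 1 : ℕ) : ℝ) * γ) := by
    rw [← Real.rpow_natCast r (m + 1), ← Real.rpow_mul hr0.le]
  have h3 : r ^ α * (r : ℝ) ^ (m : ℕ) = r ^ (((m + 1 : ℕ) : ℝ) * γ) := by
    rw [← Real.rpow_natCast r m, ← Real.rpow_add hr0]
    congr 1
    rw [hαdef]; push_cast; ring
  rw [h1, h2, ← h3]; ring

end
end
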